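/- Let D = (X, E, A) and D' = (X, E, A') be two weighted digraphs on the same finite vertex set and edge set with weight functions A, A' : E → ℝ, and let δ = max_{(x,y)∈E} |A(x,y) − A'(x,y)|. Then for every a ∈ ℝ there are inclusions of sublevel digraphs G^A_a ↪ G^{A'}_{a+δ} and of superlevel digraphs G^A_{ā} ↪ G^{A'}_{(a−δ)‾}, and symmetrically with A and A' exchanged; consequently the induced extended persistence modules V^D_p and V^{D'}_p (built from path homology of sublevel digraphs and relative path homology of superlevel digraphs) are δ-interleaved for every p. -/

import Mathlib

/-- The extended parameter poset `E = ℝ ∪ {∞} ∪ ℝᵒ`. -/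
inductive EPt : Type where
  | real : ℝ → EPt
  | infty : EPt
  | coreal : ℝ → EPt

namespace EPt

/-- The order on `E`. -/
def le : EPt → EPt → Prop
  | real a, real b => a ≤ b
  | real _, infty => True
  | real _, coreal _ => True
  | infty, infty => True
  | infty, coreal _ => True
  | coreal a, coreal b => b ≤ a
  | _, _ => False

instance : PartialOrder EPt where
  le := le
  le_refl x := by cases x <;> simp [le]
  le_trans x y z hxy hyz := by
    cases x <;> cases y <;> cases z <;> simp_all [le] <;> linarith
  le_antisymm x y hxy hyx := by
    cases x <;> cases y <;> simp_all [le] <;> linarith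

end EPt

/-- An extended persistence module. -/
structure PersMod (k : Type) [Field k] where
  V : EPt → Type
  [acg : ∀ x, AddCommGroup (V x)]
  [mod : ∀ x, Module k (V x)]
  map : ∀ {x y : EPt}, x ≤ y → (V x →ₗ[k] V y)
  map_id : ∀ (x : EPt) (h : x ≤ x), map h = LinearMap.id
  map_comp : ∀ {x y z : EPt} (h1 : x ≤ y) (h2 : y ≤ z),
    map (le_trans h1 h2) = (map h2).comp (map h1)

attribute [instance] PersMod.acg PersMod.mod

/-- `V` and `W` are `ε`-interleaved: there is a quadruple of families of maps
`φ_a, φ_b̄, ψ_a, ψ_b̄` shifted by `ε` satisfying the naturality conditions (i),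
(i') and the triangle conditions (ii), (ii') of Definition 5.5. -/
def IsInterleaved (k : Type) [Field k] (V W : PersMod k) (ε : ℝ) (hε : 0 ≤ ε) :
    Prop :=
  ∃ (φr : ∀ a : ℝ, V.V (.real a) →ₗ[k] W.V (.real (a + ε)))
    (φc : ∀ b : ℝ, V.V (.coreal b) →ₗ[k] W.V (.coreal (b - ε)))
    (ψr : ∀ a : ℝ, W.V (.real a) →ₗ[k] V.V (.real (a + ε)))
    (ψc : ∀ b : ℝ, W.V (.coreal b) →ₗ[k] V.V (.coreal (b - ε))),
    -- (i) naturality for φ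
    (∀ (a a' : ℝ) (h : a ≤ a'),
      (W.map (show EPt.real (a + ε) ≤ EPt.real (a' + ε) from
        by change a + ε ≤ a' + ε; linarith)).comp (φr a)
        = (φr a').comp (V.map (show EPt.real a ≤ EPt.real a' from h))) ∧
    (∀ a b : ℝ,
      (W.map (show EPt.real (a + ε) ≤ EPt.coreal (b - ε) from trivial)).comp (φr a)
        = (φc b).comp (V.map (show EPt.real a ≤ EPt.coreal b from trivial))) ∧
    (∀ (b b' : ℝ) (h : b' ≤ b),
      (W.map (show EPt.coreal (b - ε) ≤ EPt.coreal (b' - ε) from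
        sub_le_sub_right h ε)).comp (φc b)
        = (φc b').comp (V.map (show EPt.coreal b ≤ EPt.coreal b' from h))) ∧
    -- (i') naturality for ψ
    (∀ (a a' : ℝ) (h : a ≤ a'),
      (V.map (show EPt.real (a + ε) ≤ EPt.real (a' + ε) from
        by change a + ε ≤ a' + ε; linarith)).comp (ψr a)
        = (ψr a').comp (W.map (show EPt.real a ≤ EPt.real a' from h))) ∧
    (∀ a b : ℝ,
      (V.map (show EPt.real (a + ε) ≤ EPt.coreal (b - ε) from trivial)).comp (ψr a)
        = (ψc b).comp (W.map (show EPt.real a ≤ EPt.coreal b from trivial))) ∧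
    (∀ (b b' : ℝ) (h : b' ≤ b),
      (V.map (show EPt.coreal (b - ε) ≤ EPt.coreal (b' - ε) from
        sub_le_sub_right h ε)).comp (ψc b)
        = (ψc b').comp (W.map (show EPt.coreal b ≤ EPt.coreal b' from h))) ∧
    -- (ii) triangle conditions
    (∀ a : ℝ, (ψr (a + ε)).comp (φr a)
        = V.map (show EPt.real a ≤ EPt.real (a + ε + ε) from by
            change a ≤ a + ε + ε; linarith)) ∧
    (∀ b : ℝ, (ψc (b - ε)).comp (φc b)
        = V.map (show EPt.coreal b ≤ EPt.coreal (b - ε - ε) from by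
            change b - ε - ε ≤ b; linarith)) ∧
    -- (ii')
    (∀ a : ℝ, (φr (a + ε)).comp (ψr a)
        = W.map (show EPt.real a ≤ EPt.real (a + ε + ε) from by
            change a ≤ a + ε + ε; linarith)) ∧
    (∀ b : ℝ, (φc (b - ε)).comp (ψc b)
        = W.map (show EPt.coreal b ≤ EPt.coreal (b - ε - ε) from by
            change b - ε - ε ≤ b; linarith))


open Submodule

/-! ## Path homology of digraphs -/

/-- `Λ_p(X)`: formal `k`-linear combinations of elementary `p`-paths on `X`. -/
abbrev PathChains (k X : Type) [Field k] (p : ℕ) : Type :=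
  (Fin (p + 1) → X) →₀ k

/-- The boundary operator `∂̄ : Λ_{p+1}(X) → Λ_p(X)`. -/
noncomputable def pathBoundary (k X : Type) [Field k] (p : ℕ) :
    PathChains k X (p + 1) →ₗ[k] PathChains k X p :=
  Finsupp.lift (PathChains k X p) k (Fin (p + 2) → X) fun f =>
    ∑ i : Fin (p + 2), ((-1 : k) ^ (i : ℕ)) • Finsupp.single (f ∘ i.succAbove) 1

/-- A path is irregular if two consecutive entries coincide. -/
def IsIrregular {X : Type} {p : ℕ} (f : Fin (p + 1) → X) : Prop :=
  ∃ j : Fin p, f j.castSucc = f j.succ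

/-- The subspace of `Λ_p(X)` spanned by irregular paths. -/
noncomputable def irregularSubspace (k X : Type) [Field k] (p : ℕ) :
    Submodule k (PathChains k X p) :=
  Submodule.span k
    {g | ∃ f : Fin (p + 1) → X, IsIrregular f ∧ g = Finsupp.single f 1}

/-- The regular path complex `R_p(X) = Λ_p(X)/I_p(X)`. -/
abbrev RegChains (k X : Type) [Field k] (p : ℕ) : Type :=
  PathChains k X p ⧸ irregularSubspace k X p

open Classical in
/-- The boundary operator induced on `R_*(X)`. -/
noncomputable def regBoundary (k X : Type) [Field k] (p : ℕ) :
    RegChains k X (p + 1) →ₗ[k] RegChains k X p :=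
  if h : Submodule.map (pathBoundary k X p) (irregularSubspace k X (p + 1))
      ≤ irregularSubspace k X p then
    Submodule.mapQ _ _ (pathBoundary k X p)
      (by rwa [← Submodule.map_le_iff_le_comap])
  else 0

/-- The boundary operator out of degree `p` (zero in degree `0`). -/
noncomputable def regBoundaryFrom (k X : Type) [Field k] :
    ∀ p : ℕ, RegChains k X p →ₗ[k] RegChains k X (p - 1)
  | 0 => 0
  | (q + 1) => regBoundary k X q

/-- A path in a digraph with edge set `Es` is *allowed* if consecutive
vertices are joined by edges. -/
def IsAllowed {X : Type} (Es : Set (X × X)) {p : ℕ} (f : Fin (p + 1) → X) :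
    Prop :=
  ∀ i : Fin p, (f i.castSucc, f i.succ) ∈ Es

/-- The graded subgroup `A_p(G) ⊆ R_p(X)` of allowed paths of the digraph with
edge set `Es`. -/
noncomputable def allowedSubgroup (k X : Type) [Field k] (Es : Set (X × X))
    (p : ℕ) : Submodule k (RegChains k X p) :=
  Submodule.map (irregularSubspace k X p).mkQ
    (Submodule.span k
      {g | ∃ f : Fin (p + 1) → X, IsAllowed Es f ∧ g = Finsupp.single f 1})

/-- The supremum complex `S_p(G) = A_p(G) + ∂ A_{p+1}(G)` of the allowed-path
graded subgroup. -/
noncomputable def supCx (k X : Type) [Field k] (Es : Set (X × X)) (p : ℕ) :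
    Submodule k (RegChains k X p) :=
  allowedSubgroup k X Es p ⊔
    Submodule.map (regBoundary k X p) (allowedSubgroup k X Es (p + 1))

/-! ## Subquotient homology and inclusion-induced maps -/

/-- `RelH Z B = Z / (B ∩ Z)` : homology presented as relative cycles `Z` modulo
boundaries `B`. -/
abbrev RelH {k M : Type*} [Field k] [AddCommGroup M] [Module k M]
    (Z B : Submodule k M) : Type _ :=
  ↥Z ⧸ Submodule.comap Z.subtype B

/-- The map between subquotient homologies induced by inclusions. -/
noncomputable def RelHmap {k M : Type*} [Field k] [AddCommGroup M] [Module k M]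
    {Z₁ Z₂ B₁ B₂ : Submodule k M} (hZ : Z₁ ≤ Z₂) (hB : B₁ ≤ B₂) :
    RelH Z₁ B₁ →ₗ[k] RelH Z₂ B₂ :=
  Submodule.mapQ _ _ (Submodule.inclusion hZ)
    (fun x hx => by
      simp only [Submodule.mem_comap, Submodule.subtype_apply] at hx ⊢
      rw [Submodule.coe_inclusion]
      exact hB hx)

theorem RelHmap_id {k M : Type*} [Field k] [AddCommGroup M] [Module k M]
    (Z B : Submodule k M) :
    RelHmap (le_refl Z) (le_refl B) = LinearMap.id := by
  apply LinearMap.ext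
  intro z
  obtain ⟨x, rfl⟩ := Submodule.Quotient.mk_surjective _ z
  have hx : Submodule.inclusion (le_refl Z) x = x :=
    Subtype.ext (Submodule.coe_inclusion _ x)
  simp [RelHmap, Submodule.mapQ_apply, hx]

theorem RelHmap_comp {k M : Type*} [Field k] [AddCommGroup M] [Module k M]
    {Z₁ Z₂ Z₃ B₁ B₂ B₃ : Submodule k M}
    (hZ₁ : Z₁ ≤ Z₂) (hB₁ : B₁ ≤ B₂) (hZ₂ : Z₂ ≤ Z₃) (hB₂ : B₂ ≤ B₃) :
    (RelHmap hZ₂ hB₂).comp (RelHmap hZ₁ hB₁)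
      = RelHmap (hZ₁.trans hZ₂) (hB₁.trans hB₂) := by
  apply LinearMap.ext
  intro z
  obtain ⟨x, rfl⟩ := Submodule.Quotient.mk_surjective _ z
  have hx : Submodule.inclusion hZ₂ (Submodule.inclusion hZ₁ x)
      = Submodule.inclusion (hZ₁.trans hZ₂) x := by
    apply Subtype.ext
    simp [Submodule.coe_inclusion]
  simp [RelHmap, Submodule.mapQ_apply, hx]

/-! ## The extended persistence module of a weighted digraph -/

/-- The edge set of the digraph associated to a point of `E`: the sublevel
digraph `G_a` for `a ∈ ℝ`, and the full digraph `G` at `∞` and at co-reals. -/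
def edgeSetAt {X : Type} (Es : Set (X × X)) (A : X × X → ℝ) : EPt → Set (X × X)
  | .real a => {e ∈ Es | A e ≤ a}
  | .infty => Es
  | .coreal _ => Es

/-- The "relative part" at a point of `E`: zero at reals and at `∞`, and the
supremum complex of the superlevel digraph `G_{ā}` at a co-real `ā`. -/
noncomputable def relPartAt (k X : Type) [Field k] (Es : Set (X × X))
    (A : X × X → ℝ) (n : ℕ) : EPt → Submodule k (RegChains k X n)
  | .real _ => ⊥
  | .infty => ⊥
  | .coreal b => supCx k X {e ∈ Es | b ≤ A e} n

/-- Relative cycles of the extended persistence module `V^D_p` at `x ∈ E`. -/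
noncomputable def cycOf (k X : Type) [Field k] (Es : Set (X × X))
    (A : X × X → ℝ) (p : ℕ) (x : EPt) : Submodule k (RegChains k X p) :=
  supCx k X (edgeSetAt Es A x) p ⊓
    Submodule.comap (regBoundaryFrom k X p) (relPartAt k X Es A (p - 1) x)

/-- Relative boundaries of the extended persistence module `V^D_p` at `x ∈ E`. -/
noncomputable def bdryOf (k X : Type) [Field k] (Es : Set (X × X))
    (A : X × X → ℝ) (p : ℕ) (x : EPt) : Submodule k (RegChains k X p) :=
  Submodule.map (regBoundary k X p) (supCx k X (edgeSetAt Es A x) (p + 1)) ⊔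
    relPartAt k X Es A p x

theorem allowedSubgroup_mono (k X : Type) [Field k] {E₁ E₂ : Set (X × X)}
    (h : E₁ ⊆ E₂) (p : ℕ) :
    allowedSubgroup k X E₁ p ≤ allowedSubgroup k X E₂ p := by
  apply Submodule.map_mono
  apply Submodule.span_mono
  rintro g ⟨f, hf, rfl⟩
  exact ⟨f, fun i => h (hf i), rfl⟩

theorem supCx_mono (k X : Type) [Field k] {E₁ E₂ : Set (X × X)}
    (h : E₁ ⊆ E₂) (p : ℕ) : supCx k X E₁ p ≤ supCx k X E₂ p :=
  sup_le_sup (allowedSubgroup_mono k X h p)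
    (Submodule.map_mono (allowedSubgroup_mono k X h (p + 1)))

theorem edgeSetAt_mono {X : Type} (Es : Set (X × X)) (A : X × X → ℝ)
    {x y : EPt} (h : x ≤ y) : edgeSetAt Es A x ⊆ edgeSetAt Es A y := by
  cases x with
  | real a =>
    cases y with
    | real b => exact fun e he => ⟨he.1, he.2.trans (h : a ≤ b)⟩
    | infty => exact fun e he => he.1
    | coreal b => exact fun e he => he.1
  | infty =>
    cases y with
    | real b => exact (h : False).elim
    | infty => exact subset_rfl
    | coreal b => exact subset_rfl
  | coreal a =>
    cases y with
    | real b => exact (h : False).elim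
    | infty => exact (h : False).elim
    | coreal b => exact subset_rfl

theorem relPartAt_mono (k X : Type) [Field k] (Es : Set (X × X))
    (A : X × X → ℝ) (n : ℕ) {x y : EPt} (h : x ≤ y) :
    relPartAt k X Es A n x ≤ relPartAt k X Es A n y := by
  cases x with
  | real a =>
    cases y with
    | real b => exact le_refl _
    | infty => exact bot_le
    | coreal b => exact bot_le
  | infty =>
    cases y with
    | real b => exact (h : False).elim
    | infty => exact le_refl _
    | coreal b => exact bot_le
  | coreal a =>
    cases y with
    | real b => exact (h : False).elim
    | infty => exact (h : False).elim
    | coreal b =>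
      exact supCx_mono k X
        (show {e ∈ Es | a ≤ A e} ⊆ {e ∈ Es | b ≤ A e} from
          fun e he => ⟨he.1, le_trans (h : b ≤ a) he.2⟩) n

theorem cycOf_mono (k X : Type) [Field k] (Es : Set (X × X)) (A : X × X → ℝ)
    (p : ℕ) {x y : EPt} (h : x ≤ y) :
    cycOf k X Es A p x ≤ cycOf k X Es A p y :=
  inf_le_inf (supCx_mono k X (edgeSetAt_mono Es A h) p)
    (Submodule.comap_mono (relPartAt_mono k X Es A (p - 1) h))

theorem bdryOf_mono (k X : Type) [Field k] (Es : Set (X × X)) (A : X × X → ℝ)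
    (p : ℕ) {x y : EPt} (h : x ≤ y) :
    bdryOf k X Es A p x ≤ bdryOf k X Es A p y :=
  sup_le_sup
    (Submodule.map_mono (supCx_mono k X (edgeSetAt_mono Es A h) (p + 1)))
    (relPartAt_mono k X Es A p h)

/-- The extended persistence module `V^D_p` of the weighted digraph
`D = (X, Es, A)` in degree `p`: path homology `H_p(G_a)` of sublevel digraphs
at reals, `H_p(G)` at `∞`, and relative path homology `H_p(G, G_{ā})` at
co-reals, with all maps induced by inclusion. -/
noncomputable def pathPersMod (k X : Type) [Field k] (Es : Set (X × X))
    (A : X × X → ℝ) (p : ℕ) : PersMod k where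
  V x := RelH (cycOf k X Es A p x) (bdryOf k X Es A p x)
  map {x y} h := RelHmap (cycOf_mono k X Es A p h) (bdryOf_mono k X Es A p h)
  map_id x h := RelHmap_id _ _
  map_comp h1 h2 := (RelHmap_comp _ _ _ _).symm

/-!
Changing the weights by at most `δ` moves every edge across a threshold by at most `δ`, so
each sublevel (superlevel) digraph of `A` sits inside the `δ`-shifted sublevel (superlevel)
digraph of `A'`, and vice versa. These inclusions enlarge both the relative cycles and the
relative boundaries, so they induce the four families of interleaving maps. Every map in
sight is then induced by inclusions of subspaces of `R_p(X)`, and any two composites of such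
maps between the same subquotients coincide; this gives all naturality and triangle identities.
-/

theorem sublevel_subset_of_abs_sub_le {X : Type} {Es : Set (X × X)} {A A' : X × X → ℝ}
    {δ : ℝ} (hδ : ∀ e ∈ Es, |A e - A' e| ≤ δ) (a : ℝ) :
    {e ∈ Es | A e ≤ a} ⊆ {e ∈ Es | A' e ≤ a + δ} := fun e ⟨he, ha⟩ =>
  ⟨he, by linarith [(abs_le.mp (hδ e he)).1]⟩

theorem superlevel_subset_of_abs_sub_le {X : Type} {Es : Set (X × X)} {A A' : X × X → ℝ}
    {δ : ℝ} (hδ : ∀ e ∈ Es, |A e - A' e| ≤ δ) (a : ℝ) :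
    {e ∈ Es | a ≤ A e} ⊆ {e ∈ Es | a - δ ≤ A' e} := fun e ⟨he, ha⟩ =>
  ⟨he, by linarith [(abs_le.mp (hδ e he)).2]⟩

theorem RelHmap_comp_eq_RelHmap_comp {k M : Type*} [Field k] [AddCommGroup M] [Module k M]
    {Z₁ Z₂ Z₃ Z₂' B₁ B₂ B₃ B₂' : Submodule k M}
    (hZ₁ : Z₁ ≤ Z₂) (hB₁ : B₁ ≤ B₂) (hZ₂ : Z₂ ≤ Z₃) (hB₂ : B₂ ≤ B₃)
    (hZ₁' : Z₁ ≤ Z₂') (hB₁' : B₁ ≤ B₂') (hZ₂' : Z₂' ≤ Z₃) (hB₂' : B₂' ≤ B₃) :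
    (RelHmap hZ₂ hB₂).comp (RelHmap hZ₁ hB₁) = (RelHmap hZ₂' hB₂').comp (RelHmap hZ₁' hB₁') :=
  (RelHmap_comp hZ₁ hB₁ hZ₂ hB₂).trans (RelHmap_comp hZ₁' hB₁' hZ₂' hB₂').symm

section Interleaving

variable (k X : Type) [Field k] (Es : Set (X × X)) (A A' : X × X → ℝ) (p : ℕ)

theorem cycOf_real_le {a b : ℝ} (h : {e ∈ Es | A e ≤ a} ⊆ {e ∈ Es | A' e ≤ b}) :
    cycOf k X Es A p (.real a) ≤ cycOf k X Es A' p (.real b) :=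
  inf_le_inf (supCx_mono k X h p) le_rfl

theorem bdryOf_real_le {a b : ℝ} (h : {e ∈ Es | A e ≤ a} ⊆ {e ∈ Es | A' e ≤ b}) :
    bdryOf k X Es A p (.real a) ≤ bdryOf k X Es A' p (.real b) :=
  sup_le_sup (map_mono (supCx_mono k X h (p + 1))) le_rfl

theorem cycOf_coreal_le {a b : ℝ} (h : {e ∈ Es | a ≤ A e} ⊆ {e ∈ Es | b ≤ A' e}) :
    cycOf k X Es A p (.coreal a) ≤ cycOf k X Es A' p (.coreal b) :=
  inf_le_inf le_rfl (comap_mono (supCx_mono k X h (p - 1)))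

theorem bdryOf_coreal_le {a b : ℝ} (h : {e ∈ Es | a ≤ A e} ⊆ {e ∈ Es | b ≤ A' e}) :
    bdryOf k X Es A p (.coreal a) ≤ bdryOf k X Es A' p (.coreal b) :=
  sup_le_sup le_rfl (supCx_mono k X h p)

theorem pathPersMod_isInterleaved_of_level_subset {δ : ℝ} (hδ0 : 0 ≤ δ)
    (hsub : ∀ a : ℝ, {e ∈ Es | A e ≤ a} ⊆ {e ∈ Es | A' e ≤ a + δ})
    (hsup : ∀ a : ℝ, {e ∈ Es | a ≤ A e} ⊆ {e ∈ Es | a - δ ≤ A' e})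
    (hsub' : ∀ a : ℝ, {e ∈ Es | A' e ≤ a} ⊆ {e ∈ Es | A e ≤ a + δ})
    (hsup' : ∀ a : ℝ, {e ∈ Es | a ≤ A' e} ⊆ {e ∈ Es | a - δ ≤ A e}) :
    IsInterleaved k (pathPersMod k X Es A p) (pathPersMod k X Es A' p) δ hδ0 := by
  refine ⟨fun a => RelHmap (cycOf_real_le k X Es A A' p (hsub a))
      (bdryOf_real_le k X Es A A' p (hsub a)),
    fun b => RelHmap (cycOf_coreal_le k X Es A A' p (hsup b))
      (bdryOf_coreal_le k X Es A A' p (hsup b)),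
    fun a => RelHmap (cycOf_real_le k X Es A' A p (hsub' a))
      (bdryOf_real_le k X Es A' A p (hsub' a)),
    fun b => RelHmap (cycOf_coreal_le k X Es A' A p (hsup' b))
      (bdryOf_coreal_le k X Es A' A p (hsup' b)),
    ?_, ?_, ?_, ?_, ?_, ?_, ?_, ?_, ?_, ?_⟩ <;>
  · intros
    simp only [pathPersMod]
    first
      | exact RelHmap_comp _ _ _ _
      | exact RelHmap_comp_eq_RelHmap_comp _ _ _ _ _ _ _ _

end Interleaving

theorem path_homology_stability_general (k X : Type) [Field k]
    (Es : Set (X × X))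
    (A A' : X × X → ℝ) (δ : ℝ) (hδ0 : 0 ≤ δ)
    (hδ : ∀ e ∈ Es, |A e - A' e| ≤ δ) :
    (∀ a : ℝ, {e ∈ Es | A e ≤ a} ⊆ {e ∈ Es | A' e ≤ a + δ}) ∧
    (∀ a : ℝ, {e ∈ Es | a ≤ A e} ⊆ {e ∈ Es | a - δ ≤ A' e}) ∧
    (∀ a : ℝ, {e ∈ Es | A' e ≤ a} ⊆ {e ∈ Es | A e ≤ a + δ}) ∧
    (∀ a : ℝ, {e ∈ Es | a ≤ A' e} ⊆ {e ∈ Es | a - δ ≤ A e}) ∧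
    ∀ p : ℕ,
      IsInterleaved k (pathPersMod k X Es A p) (pathPersMod k X Es A' p) δ hδ0 := by
  have hδ' : ∀ e ∈ Es, |A' e - A e| ≤ δ := fun e he => abs_sub_comm (A e) (A' e) ▸ hδ e he
  have hsub := sublevel_subset_of_abs_sub_le hδ
  have hsup := superlevel_subset_of_abs_sub_le hδ
  have hsub' := sublevel_subset_of_abs_sub_le hδ'
  have hsup' := superlevel_subset_of_abs_sub_le hδ'
  exact ⟨hsub, hsup, hsub', hsup', fun p =>
    pathPersMod_isInterleaved_of_level_subset k X Es A A' p hδ0 hsub hsup hsub' hsup'⟩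

/-- **Stability for extended persistent path homology** (Theorem 5.13 of the
paper).  If `D = (X, Es, A)` and `D' = (X, Es, A')` are weighted digraphs on
the same vertex and edge sets with `max_{e ∈ Es} |A e - A' e| ≤ δ`, then the
sublevel digraphs of `A` include into the `δ`-shifted sublevel digraphs of `A'`
(and symmetrically, and likewise for superlevel digraphs), and consequently
the extended persistence modules `V^D_p` and `V^{D'}_p` are `δ`-interleaved
for every `p`. -/
theorem path_homology_stability (k X : Type) [Field k] [Fintype X]
    (Es : Set (X × X)) (hloop : ∀ x : X, (x, x) ∉ Es)
    (A A' : X × X → ℝ) (δ : ℝ) (hδ0 : 0 ≤ δ)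
    (hδ : ∀ e ∈ Es, |A e - A' e| ≤ δ) :
    (∀ a : ℝ, {e ∈ Es | A e ≤ a} ⊆ {e ∈ Es | A' e ≤ a + δ}) ∧
    (∀ a : ℝ, {e ∈ Es | a ≤ A e} ⊆ {e ∈ Es | a - δ ≤ A' e}) ∧
    (∀ a : ℝ, {e ∈ Es | A' e ≤ a} ⊆ {e ∈ Es | A e ≤ a + δ}) ∧
    (∀ a : ℝ, {e ∈ Es | a ≤ A' e} ⊆ {e ∈ Es | a - δ ≤ A e}) ∧
    ∀ p : ℕ,
      IsInterleaved k (pathPersMod k X Es A p) (pathPersMod k X Es A' p) δ hδ0 :=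
  path_homology_stability_general k X Es A A' δ hδ0 hδ
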